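/- arXiv:2405.05083 — 3 statements merged into one kernel-verified Lean document; each statement's English description precedes it below -/
import Mathlib

section
/- Let G be a finite simple D-regular graph with vertex set V and edge set E, and let k' be a positive integer. Set k = 3k'(k'-1)/2 + k' and p = k'(k'-1)/2 - k'. Then G contains a clique of size k' if and only if there exist a set F of edges of G, a set I of incidence pairs of G, and a set U of vertices of G such that: (i) for every edge e = {u,v} in F, both (u,e) and (v,e) belong to I; (ii) for every vertex v, if some incidence pair (v,e) belongs to I then v belongs to U; (iii) |F| + |I| + |U| = k; and (iv) |F| - |U| ≥ p. (This is the correctness of the reduction proving NP-hardness of CECAC when each attribute occurs at most twice in the constraints and each candidate has at most one attribute.) -/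
open Finset

lemma card_offDiag_image_sym2 {V : Type*} [DecidableEq V] (s : Finset V) :
    (s.offDiag.image Sym2.mk.uncurry).card = s.card.choose 2 := by
  have hdisj : Disjoint (s.diag.image Sym2.mk.uncurry) (s.offDiag.image Sym2.mk.uncurry) := by
    rw [Finset.disjoint_left]
    rintro z hz hz'
    obtain ⟨p, hp, rfl⟩ := Finset.mem_image.1 hz
    obtain ⟨q, hq, hpq⟩ := Finset.mem_image.1 hz'
    exact Finset.not_isDiag_mk_of_mem_offDiag hq (show (Sym2.mk.uncurry q).IsDiag from hpq ▸ Finset.isDiag_mk_of_mem_diag hp)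
  have hunion := Finset.image_diag_union_image_offDiag (s := s)
  have hcard : (s.diag.image Sym2.mk.uncurry).card + (s.offDiag.image Sym2.mk.uncurry).card
      = (s.card + 1).choose 2 := by
    rw [← Finset.card_union_of_disjoint hdisj, hunion, Finset.card_sym2]
  have hdiag : (s.diag.image Sym2.mk.uncurry).card = s.card := by
    rw [Finset.card_image_of_injOn, Finset.diag_card]
    rintro ⟨a, a'⟩ ha ⟨b, b'⟩ hb hab
    have ha' : a = a' := (Finset.mem_diag.1 ha).2
    have hb' : b = b' := (Finset.mem_diag.1 hb).2
    subst ha'; subst hb'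
    rw [Function.uncurry_apply_pair, Function.uncurry_apply_pair, Sym2.eq_iff] at hab
    rcases hab with ⟨rfl, -⟩ | ⟨rfl, -⟩ <;> rfl
  have hch : (s.card + 1).choose 2 = s.card.choose 2 + s.card := by
    rw [Nat.choose_succ_succ, Nat.choose_one_right]; exact Nat.add_comm _ _
  omega

lemma mem_offDiag_image_sym2 {V : Type*} [DecidableEq V] {s : Finset V} {e : Sym2 V}
    (hd : ¬ e.IsDiag) (hm : ∀ v ∈ e, v ∈ s) : e ∈ s.offDiag.image Sym2.mk.uncurry := by
  induction e using Sym2.ind with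
  | _ a b =>
    refine Finset.mem_image.2 ⟨(a, b), Finset.mem_offDiag.2 ⟨hm a ?_, hm b ?_, ?_⟩, rfl⟩
    · exact Sym2.mem_mk_left a b
    · exact Sym2.mem_mk_right a b
    · intro h
      exact hd (by simpa using h)

lemma edge_exists {V : Type*} (G : SimpleGraph V) [Fintype V] [DecidableEq V]
    [DecidableRel G.Adj] {e : Sym2 V} (he : e ∈ G.edgeFinset) :
    ∃ a b, a ≠ b ∧ G.Adj a b ∧ e = s(a, b) := by
  induction e using Sym2.ind with
  | _ a b =>
    rw [SimpleGraph.mem_edgeFinset, SimpleGraph.mem_edgeSet] at he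
    exact ⟨a, b, he.ne, he, rfl⟩

lemma pair_clique {V : Type*} [Fintype V] [DecidableEq V] (G : SimpleGraph V)
    [DecidableRel G.Adj] {a b : V} (hab : a ≠ b) (hadj : G.Adj a b) :
    G.IsNClique 2 {a, b} := by
  rw [SimpleGraph.isNClique_iff]
  constructor
  · rw [Finset.coe_insert, Finset.coe_singleton]
    exact Set.pairwise_pair.2 fun _ => ⟨hadj, hadj.symm⟩
  · exact Finset.card_pair hab


/-- Correctness of the reduction from Clique on D-regular graphs
proving NP-hardness of CECAC when each attribute occurs at most twice in the
constraints and each candidate has at most one attribute. -/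
theorem cecac_two_occurrences_reduction {V : Type*} [Fintype V] [DecidableEq V]
    (G : SimpleGraph V) [DecidableRel G.Adj] (D : ℕ)
    (hreg : G.IsRegularOfDegree D) (k' : ℕ) (hk' : 0 < k') :
    (∃ K : Finset V, G.IsNClique k' K) ↔
    ∃ (F : Finset (Sym2 V)) (I : Finset (V × Sym2 V)) (U : Finset V),
      F ⊆ G.edgeFinset ∧
      (∀ q ∈ I, q.2 ∈ G.edgeFinset ∧ q.1 ∈ q.2) ∧
      -- (i) for every edge e = {u,v} in F, both (u,e) and (v,e) belong to I
      (∀ e ∈ F, ∀ v ∈ e, (v, e) ∈ I) ∧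
      -- (ii) if some incidence pair (v,e) belongs to I then v belongs to U
      (∀ q ∈ I, q.1 ∈ U) ∧
      -- (iii) |F| + |I| + |U| = k
      F.card + I.card + U.card = 3 * k' * (k' - 1) / 2 + k' ∧
      -- (iv) |F| - |U| ≥ p, over the integers
      (F.card : ℤ) - U.card ≥ (k' : ℤ) * ((k' : ℤ) - 1) / 2 - (k' : ℤ) := by
  have h2m : 2 * (k'.choose 2) = k' * (k' - 1) := by
    rw [Nat.choose_two_right]
    have hev : Even (k' * (k' - 1)) := by
      have := Nat.even_mul_succ_self (k' - 1)
      rw [Nat.sub_add_cancel hk'] at this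
      rwa [mul_comm]
    exact Nat.mul_div_cancel' hev.two_dvd
  have h6m : 3 * k' * (k' - 1) = 6 * (k'.choose 2) := by
    rw [mul_assoc, ← h2m]; ring
  have hz : ((k' : ℤ)) * ((k' : ℤ) - 1) = 2 * (k'.choose 2 : ℤ) := by
    have := congrArg (Nat.cast : ℕ → ℤ) h2m
    push_cast [Nat.cast_sub hk'] at this
    linarith
  constructor
  · rintro ⟨K, hK⟩
    obtain ⟨hKc, hKcard⟩ := hK
    have hedge : ∀ p ∈ K.offDiag, Sym2.mk.uncurry p ∈ G.edgeFinset := by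
      rintro ⟨a, b⟩ hp
      obtain ⟨ha, hb, hab⟩ := Finset.mem_offDiag.1 hp
      rw [SimpleGraph.mem_edgeFinset]
      exact hKc ha hb hab
    refine ⟨K.offDiag.image Sym2.mk.uncurry, K.offDiag.image (fun p => (p.1, Sym2.mk.uncurry p)), K,
      ?_, ?_, ?_, ?_, ?_, ?_⟩
    · intro e he
      obtain ⟨p, hp, rfl⟩ := Finset.mem_image.1 he
      exact hedge p hp
    · rintro q hq
      obtain ⟨⟨a, b⟩, hp, rfl⟩ := Finset.mem_image.1 hq
      exact ⟨hedge _ hp, Sym2.mem_mk_left a b⟩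
    · intro e he v hv
      obtain ⟨⟨a, b⟩, hp, rfl⟩ := Finset.mem_image.1 he
      rcases Sym2.mem_iff.1 hv with rfl | rfl
      · exact Finset.mem_image.2 ⟨(v, b), hp, rfl⟩
      · refine Finset.mem_image.2 ⟨(v, a), ?_, by rw [Function.uncurry_apply_pair, Function.uncurry_apply_pair, Sym2.eq_swap]⟩
        obtain ⟨ha, hb, hab⟩ := Finset.mem_offDiag.1 hp
        exact Finset.mem_offDiag.2 ⟨hb, ha, fun h => hab h.symm⟩
    · rintro q hq
      obtain ⟨⟨a, b⟩, hp, rfl⟩ := Finset.mem_image.1 hq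
      exact (Finset.mem_offDiag.1 hp).1
    · have hF : (K.offDiag.image Sym2.mk.uncurry).card = k'.choose 2 := by
        rw [card_offDiag_image_sym2, hKcard]
      have hI : (K.offDiag.image (fun p => (p.1, Sym2.mk.uncurry p))).card = k' * k' - k' := by
        rw [Finset.card_image_of_injOn, Finset.offDiag_card, hKcard]
        rintro ⟨a, b⟩ ha ⟨c, d⟩ hc h
        obtain ⟨-, -, hab⟩ := Finset.mem_offDiag.1 ha
        simp only [Prod.mk.injEq, Function.uncurry_apply_pair, Sym2.eq_iff] at h
        obtain ⟨rfl, (⟨-, rfl⟩ | ⟨rfl, rfl⟩)⟩ := h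
        · rfl
        · exact absurd rfl hab
      rw [hF, hI, hKcard]
      have hsq : k' * (k' - 1) = k' * k' - k' := by
        cases k' with
        | zero => simp
        | succ n => rw [Nat.succ_sub_one, Nat.mul_succ, Nat.add_sub_cancel]
      omega
    · have hF : ((K.offDiag.image Sym2.mk.uncurry).card : ℤ) = (k'.choose 2 : ℤ) := by
        rw [card_offDiag_image_sym2, hKcard]
      rw [hF, hKcard, hz]
      omega
  · rintro ⟨F, I, U, hFE, hI, hinc, hIU, hsum, hprof⟩
    have hVU : ∀ e ∈ F, ∀ v ∈ e, v ∈ U := fun e he v hv => hIU _ (hinc e he v hv)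
    have hFsub : F ⊆ U.offDiag.image Sym2.mk.uncurry := by
      intro e he
      obtain ⟨a, b, hab, hadj, rfl⟩ := edge_exists G (hFE he)
      refine mem_offDiag_image_sym2 (by simpa using hab) (hVU _ he)
    have hfle : F.card ≤ U.card.choose 2 := by
      have := Finset.card_le_card hFsub
      rwa [card_offDiag_image_sym2] at this
    -- 2 |F| ≤ |I|
    have h2f : 2 * F.card ≤ I.card := by
      have hTsub : F.biUnion (fun e => I.filter (fun q => q.2 = e)) ⊆ I :=
        Finset.biUnion_subset.2 fun e _ => Finset.filter_subset _ _
      have hTcard : (F.biUnion (fun e => I.filter (fun q => q.2 = e))).card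
          = ∑ e ∈ F, (I.filter (fun q => q.2 = e)).card := by
        refine Finset.card_biUnion ?_
        intro e1 _ e2 _ hne
        rw [Function.onFun, Finset.disjoint_left]
        intro q hq1 hq2
        exact hne ((Finset.mem_filter.1 hq1).2.symm.trans (Finset.mem_filter.1 hq2).2)
      have hterm : ∀ e ∈ F, 2 ≤ (I.filter (fun q => q.2 = e)).card := by
        intro e he
        obtain ⟨a, b, hab, hadj, rfl⟩ := edge_exists G (hFE he)
        refine Finset.one_lt_card.2 ?_
        refine ⟨(a, s(a, b)), ?_, (b, s(a, b)), ?_, ?_⟩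
        · exact Finset.mem_filter.2 ⟨hinc _ he a (Sym2.mem_mk_left a b), rfl⟩
        · exact Finset.mem_filter.2 ⟨hinc _ he b (Sym2.mem_mk_right a b), rfl⟩
        · simp [hab]
      calc 2 * F.card = ∑ _e ∈ F, 2 := by rw [Finset.sum_const, smul_eq_mul]; ring
        _ ≤ ∑ e ∈ F, (I.filter (fun q => q.2 = e)).card := Finset.sum_le_sum hterm
        _ = _ := hTcard.symm
        _ ≤ I.card := Finset.card_le_card hTsub
    have hu1 : 1 ≤ U.card := by
      rcases Finset.eq_empty_or_nonempty U with hU | ⟨v, hv⟩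
      · exfalso
        have hIe : I = ∅ := Finset.eq_empty_of_forall_notMem fun q hq => by
          simpa [hU] using hIU q hq
        have hFe : F = ∅ := Finset.eq_empty_of_forall_notMem fun e he => by
          obtain ⟨a, b, hab, hadj, rfl⟩ := edge_exists G (hFE he)
          simpa [hIe] using hinc _ he a (Sym2.mem_mk_left a b)
        rw [hFe, hIe, hU] at hsum
        simp at hsum
        omega
      · exact Finset.card_pos.2 ⟨v, hv⟩
    have hsum' : F.card + I.card + U.card = 3 * k'.choose 2 + k' := by omega
    have hprof' : k'.choose 2 + U.card ≤ F.card + k' := by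
      rw [hz] at hprof
      omega
    by_cases hk2 : k' = 2
    · subst hk2
      rcases Finset.eq_empty_or_nonempty F with hFe | ⟨e, he⟩
      · rcases Finset.eq_empty_or_nonempty I with hIe | ⟨q, hq⟩
        · exfalso
          rw [hFe, hIe] at hsum'
          simp at hsum'
          omega
        · obtain ⟨a, b, hab, hadj, -⟩ := edge_exists G (hI q hq).1
          exact ⟨{a, b}, pair_clique G hab hadj⟩
      · obtain ⟨a, b, hab, hadj, -⟩ := edge_exists G (hFE he)
        exact ⟨{a, b}, pair_clique G hab hadj⟩
    · have hueq : U.card = k' := by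
        by_contra hne
        have hult : U.card < k' := by omega
        have hk3 : 3 ≤ k' := by omega
        have h2cu : 2 * (U.card.choose 2) = U.card * (U.card - 1) := by
          rw [Nat.choose_two_right]
          have hev : Even (U.card * (U.card - 1)) := by
            have := Nat.even_mul_succ_self (U.card - 1)
            rw [Nat.sub_add_cancel hu1] at this
            rwa [mul_comm]
          exact Nat.mul_div_cancel' hev.two_dvd
        have key : k'.choose 2 + U.card ≤ U.card.choose 2 + k' := by omega
        -- move to ℤ
        have hz2 : ((U.card : ℤ)) * ((U.card : ℤ) - 1) = 2 * (U.card.choose 2 : ℤ) := by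
          have := congrArg (Nat.cast : ℕ → ℤ) h2cu
          push_cast [Nat.cast_sub hu1] at this
          linarith
        have h1 : (1 : ℤ) ≤ (k' : ℤ) - U.card := by
          have : (U.card : ℤ) < (k' : ℤ) := by exact_mod_cast hult
          omega
        have h2 : (1 : ℤ) ≤ (k' : ℤ) + U.card - 3 := by
          have : (1 : ℤ) ≤ (U.card : ℤ) := by exact_mod_cast hu1
          have : (3 : ℤ) ≤ (k' : ℤ) := by exact_mod_cast hk3
          omega
        have hprodn := mul_le_mul h1 h2 (by norm_num) (by linarith)
        have keyz : (k'.choose 2 : ℤ) + U.card ≤ (U.card.choose 2 : ℤ) + k' := by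
          exact_mod_cast key
        nlinarith [hz, hz2, hprodn, keyz]
      have hfeq : F.card = k'.choose 2 := by
        rw [hueq] at hfle hprof'
        omega
      have heq : F = U.offDiag.image Sym2.mk.uncurry := by
        refine Finset.eq_of_subset_of_card_le hFsub ?_
        rw [card_offDiag_image_sym2, hueq, hfeq]
      refine ⟨U, ⟨?_, hueq⟩⟩
      intro a ha b hb hab
      have hmem : s(a, b) ∈ U.offDiag.image Sym2.mk.uncurry := by
        refine mem_offDiag_image_sym2 (by simpa using hab) ?_
        intro v hv
        rcases Sym2.mem_iff.1 hv with rfl | rfl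
        · exact ha
        · exact hb
      rw [← heq] at hmem
      exact (G.mem_edgeSet).1 (SimpleGraph.mem_edgeFinset.1 (hFE hmem))
end

section
/- Let C be a finite set of candidates, A a finite set of attributes, α : C → Finset A an attribute function, and S : C → ℝ a profit function. For every subset W ⊆ C with |W| = k there exists a subset W' ⊆ C such that: (i) |W'| = k; (ii) the image of W' under α equals the image of W under α (in particular, the union of the attribute sets of the candidates in W' equals the union of the attribute sets of the candidates in W, so W' satisfies exactly the same attribute constraints as W); (iii) the total profit of W' is at least the total profit of W; and (iv) for every attribute-set t in the common image, W' contains a candidate c with α(c) = t whose profit is maximal among all candidates c' ∈ C with α(c') = t. (This exchange lemma underlies the fixed-parameter algorithm for CECAC parameterized by the number of attributes.) -/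
/-- Exchange lemma underlying the FPT algorithm for CECAC
parameterized by the number of attributes: any size-`k` committee `W` can be
replaced by a size-`k` committee `W'` with the same image of attribute sets,
at least the same total profit, containing for each occurring attribute set a
candidate of maximal profit among all candidates with that attribute set. -/
theorem cecac_exchange_lemma {C A : Type*} [Fintype C] [DecidableEq C] [DecidableEq A]
    (α : C → Finset A) (S : C → ℝ) (k : ℕ) (W : Finset C) (hW : W.card = k) :
    ∃ W' : Finset C,
      -- (i) |W'| = k
      W'.card = k ∧
      -- (ii) same image of attribute sets
      W'.image α = W.image α ∧
      -- (iii) total profit of W' is at least that of W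
      (∑ c ∈ W, S c) ≤ (∑ c ∈ W', S c) ∧
      -- (iv) W' contains a maximal-profit candidate of each occurring type
      (∀ t ∈ W.image α, ∃ c ∈ W', α c = t ∧ ∀ c' : C, α c' = t → S c' ≤ S c) := by
  classical
  -- "bad" types of a committee: occurring types with no maximal candidate present
  let bad : Finset C → Finset (Finset A) := fun V =>
    (V.image α).filter (fun t => ¬ ∃ c ∈ V, α c = t ∧ ∀ c' : C, α c' = t → S c' ≤ S c)
  suffices H : ∀ n (V : Finset C), V.card = k → (bad V).card ≤ n →
      ∃ W' : Finset C, W'.card = k ∧ W'.image α = V.image α ∧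
        (∑ c ∈ V, S c) ≤ (∑ c ∈ W', S c) ∧
        (∀ t ∈ V.image α, ∃ c ∈ W', α c = t ∧ ∀ c' : C, α c' = t → S c' ≤ S c) by
    exact H (bad W).card W hW le_rfl
  intro n
  induction n with
  | zero =>
    intro V hV hbad
    refine ⟨V, hV, rfl, le_rfl, ?_⟩
    intro t ht
    by_contra hno
    have : t ∈ bad V := Finset.mem_filter.mpr ⟨ht, hno⟩
    simp [Finset.card_eq_zero.mp (Nat.le_zero.mp hbad)] at this
  | succ n ih =>
    intro V hV hbad
    rcases Finset.eq_empty_or_nonempty (bad V) with he | ⟨t, ht⟩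
    · exact ih V hV (by simp [he])
    · have ht' := Finset.mem_filter.mp ht
      obtain ⟨htim, hno⟩ := ht'
      obtain ⟨w, hwV, hwt⟩ := Finset.mem_image.mp htim
      -- pick a globally maximal candidate of type t
      have hne : (Finset.univ.filter (fun c => α c = t)).Nonempty :=
        ⟨w, by simp [hwt]⟩
      obtain ⟨b, hb, hbmax⟩ := Finset.exists_max_image _ S hne
      have hbt : α b = t := (Finset.mem_filter.mp hb).2
      have hbmax' : ∀ c' : C, α c' = t → S c' ≤ S b := by
        intro c' hc'; exact hbmax c' (by simp [hc'])
      have hbV : b ∉ V := fun hbV => hno ⟨b, hbV, hbt, hbmax'⟩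
      set V' : Finset C := insert b (V.erase w) with hV'def
      have hbe : b ∉ V.erase w := fun h => hbV (Finset.mem_of_mem_erase h)
      have hcard : V'.card = k := by
        rw [hV'def, Finset.card_insert_of_notMem hbe,
          Finset.card_erase_of_mem hwV, hV]
        have hk : 1 ≤ k := hV ▸ Finset.card_pos.mpr ⟨w, hwV⟩
        omega
      have him : V'.image α = V.image α := by
        apply Finset.Subset.antisymm
        · intro s hs
          rcases Finset.mem_image.mp hs with ⟨c, hc, hct⟩
          rcases Finset.mem_insert.mp hc with rfl | hc
          · exact hct ▸ (hbt ▸ htim)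
          · exact Finset.mem_image.mpr ⟨c, Finset.mem_of_mem_erase hc, hct⟩
        · intro s hs
          rcases Finset.mem_image.mp hs with ⟨c, hc, hct⟩
          by_cases hcw : c = w
          · subst hcw
            exact Finset.mem_image.mpr ⟨b, Finset.mem_insert_self _ _, by rw [hbt, ← hwt, hct]⟩
          · exact Finset.mem_image.mpr ⟨c, Finset.mem_insert_of_mem (Finset.mem_erase.mpr ⟨hcw, hc⟩), hct⟩
      have hsum : (∑ c ∈ V, S c) ≤ (∑ c ∈ V', S c) := by
        rw [hV'def, Finset.sum_insert hbe, Finset.sum_erase_eq_sub hwV]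
        have : S w ≤ S b := hbmax' w hwt
        linarith
      -- bad V' ⊆ (bad V).erase t
      have hbad' : bad V' ⊆ (bad V).erase t := by
        intro s hs
        have hs' := Finset.mem_filter.mp hs
        obtain ⟨hsim, hsno⟩ := hs'
        have hst : s ≠ t := by
          rintro rfl
          exact hsno ⟨b, Finset.mem_insert_self _ _, hbt, hbmax'⟩
        refine Finset.mem_erase.mpr ⟨hst, Finset.mem_filter.mpr ⟨him ▸ hsim, ?_⟩⟩
        rintro ⟨c, hcV, hct, hcmax⟩
        have hcw : c ≠ w := fun h => hst (by rw [← hct, h, hwt])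
        exact hsno ⟨c, Finset.mem_insert_of_mem (Finset.mem_erase.mpr ⟨hcw, hcV⟩), hct, hcmax⟩
      have hbadcard : (bad V').card ≤ n := by
        have h1 : (bad V').card ≤ ((bad V).erase t).card := Finset.card_le_card hbad'
        have h2 : ((bad V).erase t).card = (bad V).card - 1 :=
          Finset.card_erase_of_mem ht
        omega
      obtain ⟨W', h1, h2, h3, h4⟩ := ih V' hcard hbadcard
      exact ⟨W', h1, h2.trans him, hsum.trans h3, fun s hs => h4 s (him ▸ hs)⟩
end

section
/- Let C1 and C2 be disjoint finite sets and S a real-valued profit function defined on C1 ∪ C2. For every natural number i with i ≤ |C1| + |C2|, the maximum of ∑_{c ∈ W} S(c) over all subsets W ⊆ C1 ∪ C2 with |W| = i equals the maximum, over all natural numbers j with max(0, i - |C2|) ≤ j ≤ min(i, |C1|), of the sum of the maximum total profit of a size-j subset of C1 and the maximum total profit of a size-(i-j) subset of C2. (This establishes the correctness of the AND vector operation in the dynamic program for the polynomial-time case of CECAC.) -/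
/-- The maximum total profit of a size-`j` subset of the finite set `C`. -/
noncomputable def maxProfit {X : Type*} (S : X → ℝ) (C : Finset X) (j : ℕ) : ℝ :=
  sSup {x : ℝ | ∃ W ⊆ C, W.card = j ∧ x = ∑ c ∈ W, S c}

lemma setA_eq {X : Type*} [DecidableEq X] (S : X → ℝ) (C : Finset X) (j : ℕ) :
    {x : ℝ | ∃ W ⊆ C, W.card = j ∧ x = ∑ c ∈ W, S c} =
      ↑((C.powersetCard j).image fun W => ∑ c ∈ W, S c) := by
  ext x
  simp only [Set.mem_setOf_eq, Finset.coe_image, Set.mem_image, Finset.mem_coe,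
    Finset.mem_powersetCard]
  constructor
  · rintro ⟨W, h1, h2, rfl⟩; exact ⟨W, ⟨h1, h2⟩, rfl⟩
  · rintro ⟨W, ⟨h1, h2⟩, rfl⟩; exact ⟨W, h1, h2, rfl⟩

lemma bddA {X : Type*} [DecidableEq X] (S : X → ℝ) (C : Finset X) (j : ℕ) :
    BddAbove {x : ℝ | ∃ W ⊆ C, W.card = j ∧ x = ∑ c ∈ W, S c} := by
  rw [setA_eq]; exact (Finset.image _ _).bddAbove

lemma finA {X : Type*} [DecidableEq X] (S : X → ℝ) (C : Finset X) (j : ℕ) :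
    ({x : ℝ | ∃ W ⊆ C, W.card = j ∧ x = ∑ c ∈ W, S c}).Finite := by
  rw [setA_eq]; exact (Finset.image _ _).finite_toSet

lemma le_maxProfit {X : Type*} [DecidableEq X] (S : X → ℝ) {C W : Finset X} {j : ℕ}
    (hW : W ⊆ C) (hc : W.card = j) : ∑ c ∈ W, S c ≤ maxProfit S C j :=
  le_csSup (bddA S C j) ⟨W, hW, hc, rfl⟩

lemma exists_maxProfit {X : Type*} [DecidableEq X] (S : X → ℝ) {C : Finset X} {j : ℕ}
    (hj : j ≤ C.card) : ∃ W ⊆ C, W.card = j ∧ maxProfit S C j = ∑ c ∈ W, S c := by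
  have hne : {x : ℝ | ∃ W ⊆ C, W.card = j ∧ x = ∑ c ∈ W, S c}.Nonempty := by
    obtain ⟨W, hW, hc⟩ := Finset.exists_subset_card_eq hj
    exact ⟨_, W, hW, hc, rfl⟩
  exact hne.csSup_mem (finA S C j)

/-- Correctness of the AND vector operation in the dynamic
program: for disjoint finite sets `C1`, `C2` and `i ≤ |C1| + |C2|`, the maximum
total profit of a size-`i` subset of `C1 ∪ C2` equals the maximum over all
`j` with `max(0, i - |C2|) ≤ j ≤ min(i, |C1|)` of the sum of the maximum total
profit of a size-`j` subset of `C1` and of a size-`(i-j)` subset of `C2`. -/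
theorem and_operation_correct {X : Type*} [DecidableEq X] (C1 C2 : Finset X)
    (hdisj : Disjoint C1 C2) (S : X → ℝ) (i : ℕ) (hi : i ≤ C1.card + C2.card) :
    maxProfit S (C1 ∪ C2) i =
      sSup {x : ℝ | ∃ j : ℕ, i - C2.card ≤ j ∧ j ≤ min i C1.card ∧
        x = maxProfit S C1 j + maxProfit S C2 (i - j)} := by
  set B : Set ℝ := {x : ℝ | ∃ j : ℕ, i - C2.card ≤ j ∧ j ≤ min i C1.card ∧
      x = maxProfit S C1 j + maxProfit S C2 (i - j)} with hB
  have hBeq : B = ↑((Finset.Icc (i - C2.card) (min i C1.card)).image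
      fun j => maxProfit S C1 j + maxProfit S C2 (i - j)) := by
    ext x
    simp only [hB, Set.mem_setOf_eq, Finset.coe_image, Set.mem_image, Finset.mem_coe,
      Finset.mem_Icc]
    constructor
    · rintro ⟨j, h1, h2, rfl⟩; exact ⟨j, ⟨h1, h2⟩, rfl⟩
    · rintro ⟨j, ⟨h1, h2⟩, rfl⟩; exact ⟨j, h1, h2, rfl⟩
  have hBbdd : BddAbove B := by rw [hBeq]; exact (Finset.image _ _).bddAbove
  have hcard : (C1 ∪ C2).card = C1.card + C2.card := Finset.card_union_of_disjoint hdisj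
  have hAne : {x : ℝ | ∃ W ⊆ C1 ∪ C2, W.card = i ∧ x = ∑ c ∈ W, S c}.Nonempty := by
    obtain ⟨W, hW, hc⟩ := Finset.exists_subset_card_eq (hcard ▸ hi)
    exact ⟨_, W, hW, hc, rfl⟩
  have hBne : B.Nonempty := ⟨_, min i C1.card, by omega, le_refl _, rfl⟩
  apply le_antisymm
  · apply csSup_le hAne
    rintro x ⟨W, hW, hc, rfl⟩
    set W1 := W ∩ C1 with hW1
    set W2 := W ∩ C2 with hW2
    have hWu : W = W1 ∪ W2 := by
      rw [hW1, hW2, ← Finset.inter_union_distrib_left,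
        Finset.inter_eq_left.mpr hW]
    have hd12 : Disjoint W1 W2 := hdisj.mono Finset.inter_subset_right Finset.inter_subset_right
    have hcards : W1.card + W2.card = i := by
      rw [← hc, hWu, Finset.card_union_of_disjoint hd12]
    have h1c : W1.card ≤ C1.card := Finset.card_le_card Finset.inter_subset_right
    have h2c : W2.card ≤ C2.card := Finset.card_le_card Finset.inter_subset_right
    have hsum : ∑ c ∈ W, S c = ∑ c ∈ W1, S c + ∑ c ∈ W2, S c := by
      rw [hWu, Finset.sum_union hd12]
    have hx : ∑ c ∈ W, S c ≤ maxProfit S C1 W1.card + maxProfit S C2 (i - W1.card) := by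
      rw [hsum]
      have h2card : W2.card = i - W1.card := by omega
      exact add_le_add (le_maxProfit S Finset.inter_subset_right rfl)
        (h2card ▸ le_maxProfit S Finset.inter_subset_right rfl)
    refine hx.trans (le_csSup hBbdd ⟨W1.card, by omega, by omega, rfl⟩)
  · apply csSup_le hBne
    rintro x ⟨j, h1, h2, rfl⟩
    have hj1 : j ≤ C1.card := by omega
    have hj2 : i - j ≤ C2.card := by omega
    obtain ⟨W1, hW1, hc1, he1⟩ := exists_maxProfit S hj1
    obtain ⟨W2, hW2, hc2, he2⟩ := exists_maxProfit S hj2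
    have hd12 : Disjoint W1 W2 := hdisj.mono hW1 hW2
    have hmem : ∑ c ∈ W1, S c + ∑ c ∈ W2, S c ∈
        {x : ℝ | ∃ W ⊆ C1 ∪ C2, W.card = i ∧ x = ∑ c ∈ W, S c} := by
      refine ⟨W1 ∪ W2, Finset.union_subset_union hW1 hW2, ?_, (Finset.sum_union hd12).symm⟩
      rw [Finset.card_union_of_disjoint hd12, hc1, hc2]; omega
    rw [he1, he2]
    exact le_csSup (bddA S (C1 ∪ C2) i) hmem
end
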